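/- arXiv:1407.0135 — 4 statements merged into one kernel-verified Lean document; each statement's English description precedes it below -/
import Mathlib

section
/- The map (α, β, γ, a, t, u) ↦ (a, b, N), where b = αat + β and N = (αat + β)(au + γ) + α, is a bijection from the set of 6-tuples of integers satisfying a ≥ 1, α ≥ 1, 0 ≤ β < αa, 0 ≤ γ < a, t ≥ 0, u ≥ 0 and α < αat + β, onto the set of triples (a, b, N) of positive integers with b ≥ 2 and N not divisible by b. Moreover, the inverse map is given by α = N mod b, β = b mod (αa), γ = ⌊N/b⌋ mod a, t = ⌊b/(αa)⌋, u = ⌊⌊N/b⌋/a⌋. -/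
/-- The set of 6-tuples `(α, β, γ, a, t, u)` of integers satisfying
`a ≥ 1`, `α ≥ 1`, `0 ≤ β < αa`, `0 ≤ γ < a`, `t ≥ 0`, `u ≥ 0` and `α < αat + β`. -/
def GeomCodeDomain : Set (ℤ × ℤ × ℤ × ℤ × ℤ × ℤ) :=
  {q | match q with
    | (α, β, γ, a, t, u) =>
      1 ≤ a ∧ 1 ≤ α ∧ 0 ≤ β ∧ β < α * a ∧ 0 ≤ γ ∧ γ < a ∧ 0 ≤ t ∧ 0 ≤ u ∧
        α < α * a * t + β}

/-- The set of triples `(a, b, N)` of positive integers with `b ≥ 2` and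
`N` not divisible by `b`. -/
def GeomCodeCodomain : Set (ℤ × ℤ × ℤ) :=
  {p | match p with
    | (a, b, N) => 1 ≤ a ∧ 2 ≤ b ∧ 1 ≤ N ∧ ¬ b ∣ N}

/-- The map `(α, β, γ, a, t, u) ↦ (a, b, N)` with `b = αat + β` and
`N = (αat + β)(au + γ) + α`. -/
def geomCodeMap (q : ℤ × ℤ × ℤ × ℤ × ℤ × ℤ) : ℤ × ℤ × ℤ :=
  match q with
  | (α, β, γ, a, t, u) => (a, α * a * t + β, (α * a * t + β) * (a * u + γ) + α)

/-- The inverse map `(a, b, N) ↦ (α, β, γ, a, t, u)` given by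
`α = N mod b`, `β = b mod (αa)`, `γ = ⌊N/b⌋ mod a`, `t = ⌊b/(αa)⌋`, `u = ⌊⌊N/b⌋/a⌋`. -/
def geomCodeInv (p : ℤ × ℤ × ℤ) : ℤ × ℤ × ℤ × ℤ × ℤ × ℤ :=
  match p with
  | (a, b, N) => (N % b, b % ((N % b) * a), (N / b) % a, a, b / ((N % b) * a), (N / b) / a)

/-! The map is three nested Euclidean divisions: `b = (αa)·t + β` with `0 ≤ β < αa`,
`N = b·q + α` with `q = au + γ`, and `q = a·u + γ` with `0 ≤ γ < a`. The condition `α < b`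
makes `α` the remainder of `N` modulo `b`, and `α ≥ 1` is then exactly `b ∤ N`; so both
composites are the identity by uniqueness of quotient and remainder. -/

namespace GeomCode

lemma mul_add_ediv_emod_of_lt {d r : ℤ} (q : ℤ) (hr : 0 ≤ r) (hrd : r < d) :
    (d * q + r) / d = q ∧ (d * q + r) % d = r :=
  (Int.ediv_emod_unique (hr.trans_lt hrd)).2 ⟨add_comm _ _, hr, hrd⟩

lemma mapsTo : Set.MapsTo geomCodeMap GeomCodeDomain GeomCodeCodomain := by
  rintro ⟨α, β, γ, a, t, u⟩ ⟨ha, hα, -, -, hγ0, -, -, hu, hαb⟩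
  have hN_mod : ((α * a * t + β) * (a * u + γ) + α) % (α * a * t + β) = α :=
    (mul_add_ediv_emod_of_lt _ (by omega) hαb).2
  have hbq : 0 ≤ (α * a * t + β) * (a * u + γ) := mul_nonneg (by omega) (by positivity)
  refine ⟨ha, by omega, by omega, fun hdvd => ?_⟩
  rw [Int.dvd_iff_emod_eq_zero, hN_mod] at hdvd
  omega

lemma leftInvOn : Set.LeftInvOn geomCodeInv geomCodeMap GeomCodeDomain := by
  rintro ⟨α, β, γ, a, t, u⟩ ⟨-, hα, hβ0, hβ, hγ0, hγ, -, -, hαb⟩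
  obtain ⟨hN_div, hN_mod⟩ := mul_add_ediv_emod_of_lt (a * u + γ) (by omega) hαb
  obtain ⟨hb_div, hb_mod⟩ := mul_add_ediv_emod_of_lt t hβ0 hβ
  obtain ⟨hq_div, hq_mod⟩ := mul_add_ediv_emod_of_lt u hγ0 hγ
  simp only [geomCodeMap, geomCodeInv, hN_div, hN_mod, hb_div, hb_mod, hq_div, hq_mod]

lemma invMapsTo : Set.MapsTo geomCodeInv GeomCodeCodomain GeomCodeDomain := by
  rintro ⟨a, b, N⟩ ⟨ha, hb, hN, hndvd⟩
  have hα : 1 ≤ N % b := by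
    have := Int.emod_nonneg N (b := b) (by omega)
    have : N % b ≠ 0 := fun h => hndvd (Int.dvd_iff_emod_eq_zero.2 h)
    omega
  have hαa : 0 < N % b * a := by positivity
  refine ⟨ha, hα, Int.emod_nonneg b hαa.ne', Int.emod_lt_of_pos b hαa,
    Int.emod_nonneg _ (by omega), Int.emod_lt_of_pos _ (by omega),
    Int.ediv_nonneg (by omega) hαa.le,
    Int.ediv_nonneg (Int.ediv_nonneg (by omega) (by omega)) (by omega), ?_⟩
  rw [Int.mul_ediv_add_emod]
  exact Int.emod_lt_of_pos N (by omega)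

lemma rightInvOn : Set.RightInvOn geomCodeInv geomCodeMap GeomCodeCodomain := by
  rintro ⟨a, b, N⟩ -
  simp only [geomCodeMap, geomCodeInv, Int.mul_ediv_add_emod]

end GeomCode

/-- The map `(α, β, γ, a, t, u) ↦ (a, αat + β, (αat + β)(au + γ) + α)` is a bijection
from `GeomCodeDomain` onto `GeomCodeCodomain`, with inverse given by `geomCodeInv`. -/
theorem geomCode_bijOn_and_invOn :
    Set.BijOn geomCodeMap GeomCodeDomain GeomCodeCodomain ∧
      Set.InvOn geomCodeInv geomCodeMap GeomCodeDomain GeomCodeCodomain :=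
  have hinv := ⟨GeomCode.leftInvOn, GeomCode.rightInvOn⟩
  ⟨hinv.bijOn GeomCode.mapsTo GeomCode.invMapsTo, hinv⟩
end

section
/- Let (a, b, N) be a triple of positive integers with b ≥ 2 and N not divisible by b, and set α = N mod b, β = b mod (αa), γ = ⌊N/b⌋ mod a. Then N is coprime to both a and b if and only if gcd(α, β) = 1 and gcd(a, α + βγ) = 1. -/
/-!
Both gcd conditions are obtained from `gcd(N, b)` and `gcd(N, a)` by reducing one argument
modulo a multiple of the other. For `b`: `gcd(N, b) = gcd(α, b)` and `β ≡ b (mod α)`. For `a`: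
`β ≡ b` and `γ ≡ ⌊N/b⌋ (mod a)`, so `α + βγ ≡ α + b⌊N/b⌋ = N (mod a)`.
-/

theorem Int.ModEq.gcd_eq {m x y : ℤ} (h : x ≡ y [ZMOD m]) : Int.gcd x m = Int.gcd y m := by
  rw [← Int.gcd_emod, h, Int.gcd_emod]

theorem Int.gcd_emod_mul_right (x y a : ℤ) : Int.gcd x (y % (x * a)) = Int.gcd x y := by
  have h : y % (x * a) ≡ y [ZMOD x] := Int.emod_emod_of_dvd y (dvd_mul_right x a)
  rw [Int.gcd_comm, h.gcd_eq, Int.gcd_comm]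

theorem Int.emod_add_emod_mul_mul_ediv_emod_modEq (N b a : ℤ) :
    N % b + b % (N % b * a) * (N / b % a) ≡ N [ZMOD a] :=
  calc N % b + b % (N % b * a) * (N / b % a) ≡ N % b + b * (N / b) [ZMOD a] :=
        have hβ : b % (N % b * a) ≡ b [ZMOD a] := Int.emod_emod_of_dvd b (dvd_mul_left a _)
        have hγ : N / b % a ≡ N / b [ZMOD a] := Int.emod_emod_of_dvd _ dvd_rfl
        (Int.ModEq.refl _).add (hβ.mul hγ)
    _ = N := Int.emod_add_mul_ediv N b

theorem coprime_iff_geomCode_conditions_general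
    (a b N : ℤ)
    (α β γ : ℤ)
    (hα : α = N % b) (hβ : β = b % (α * a)) (hγ : γ = (N / b) % a) :
    (Int.gcd N a = 1 ∧ Int.gcd N b = 1) ↔
      (Int.gcd α β = 1 ∧ Int.gcd a (α + β * γ) = 1) := by
  subst hα hβ hγ
  have hNb : Int.gcd N b = Int.gcd (N % b) (b % (N % b * a)) := by
    rw [Int.gcd_emod_mul_right, Int.gcd_emod]
  have hNa : Int.gcd N a = Int.gcd a (N % b + b % (N % b * a) * (N / b % a)) := by
    rw [Int.gcd_comm a, (Int.emod_add_emod_mul_mul_ediv_emod_modEq N b a).gcd_eq]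
  rw [hNa, hNb, and_comm]

/-- Let `(a, b, N)` be a triple of positive integers with `b ≥ 2` and `N` not
divisible by `b`, and set `α = N mod b`, `β = b mod (αa)`, `γ = ⌊N/b⌋ mod a`.
Then `N` is coprime to both `a` and `b` iff `gcd(α, β) = 1` and `gcd(a, α + βγ) = 1`. -/
theorem coprime_iff_geomCode_conditions
    (a b N : ℤ) (ha : 1 ≤ a) (hb : 2 ≤ b) (hN : 1 ≤ N) (hnd : ¬ b ∣ N)
    (α β γ : ℤ)
    (hα : α = N % b) (hβ : β = b % (α * a)) (hγ : γ = (N / b) % a) :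
    (Int.gcd N a = 1 ∧ Int.gcd N b = 1) ↔
      (Int.gcd α β = 1 ∧ Int.gcd a (α + β * γ) = 1) :=
  coprime_iff_geomCode_conditions_general a b N α β γ hα hβ hγ
end

section
/- Let a, b, N be positive integers such that both a and b are coprime to N. Then vrm(|Γ(a,b,N)|) is a finite axial subset of ℝ³_{≥0} in general position. -/
/-- The box `Π(A)` spanned by a (finite nonempty) set `A ⊆ ℝⁿ_{≥0}`:
all points with nonnegative coordinates bounded by the coordinatewise maxima of `A`. -/
def box {n : ℕ} (A : Set (Fin n → ℝ)) : Set (Fin n → ℝ) :=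
  {x | ∀ i, 0 ≤ x i ∧ x i ≤ sSup ((fun p => p i) '' A)}

/-- The set of Voronoi relative minima of `S`: points `g ∈ S` such that the box
`Π({g})` contains no point of `S \ {g}`. -/
def vrm {n : ℕ} (S : Set (Fin n → ℝ)) : Set (Fin n → ℝ) :=
  {g | g ∈ S ∧ ∀ p ∈ S, p ≠ g → p ∉ box {g}}

/-- A nonempty finite subset `F ⊆ vrm S` is minimal if the box `Π(F)` contains
no point of `vrm S \ F`. -/
def IsMinimal {n : ℕ} (S F : Set (Fin n → ℝ)) : Prop :=
  F.Nonempty ∧ F.Finite ∧ F ⊆ vrm S ∧ ∀ p ∈ vrm S, p ∉ F → p ∉ box F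

/-- `p` is a point on the `j`-th coordinate axis, different from the origin. -/
def OnAxis (j : Fin 3) (p : Fin 3 → ℝ) : Prop :=
  p ≠ 0 ∧ ∀ k, k ≠ j → p k = 0

/-- `S ⊆ ℝ³` is axial if it contains a point on each of the three coordinate axes. -/
def Axial (S : Set (Fin 3 → ℝ)) : Prop :=
  ∀ j : Fin 3, ∃ p ∈ S, ∀ k, k ≠ j → p k = 0

/-- A finite axial set `S ⊆ ℝ³_{≥0}` is in general position if (i) each coordinate
plane contains exactly two points of `S`, neither at the origin, lying on the two
coordinate axes contained in that plane, and (ii) every other plane parallel to a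
coordinate plane contains at most one point of `S`. -/
def GeneralPosition (S : Set (Fin 3 → ℝ)) : Prop :=
  (∀ i : Fin 3, ∃ p q : Fin 3 → ℝ, p ≠ q ∧ {r | r ∈ S ∧ r i = 0} = {p, q} ∧
    ∃ j k : Fin 3, j ≠ i ∧ k ≠ i ∧ j ≠ k ∧ OnAxis j p ∧ OnAxis k q) ∧
  (∀ i : Fin 3, ∀ c : ℝ, c ≠ 0 → {r | r ∈ S ∧ r i = c}.Subsingleton)

/-- The rank-1 lattice `Γ(a,b,N) = {m₁·(1,a,b) + m₂·(0,N,0) + m₃·(0,0,N)} ⊆ ℝ³`. -/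
def Gamma (a b N : ℤ) : Set (Fin 3 → ℝ) :=
  {p | ∃ m₁ m₂ m₃ : ℤ,
    p = ![(m₁ : ℝ), (m₁ : ℝ) * a + (m₂ : ℝ) * N, (m₁ : ℝ) * b + (m₃ : ℝ) * N]}

/-- `|Γ| = {(|x₁|,…,|xₙ|) : x ∈ Γ} \ {0}`. -/
def absSet {n : ℕ} (L : Set (Fin n → ℝ)) : Set (Fin n → ℝ) :=
  {q | (∃ p ∈ L, ∀ i, q i = |p i|) ∧ q ≠ 0}

/-- `|x|_N = min(x mod N, (−x) mod N)`, the distance from `x` to the nearest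
multiple of `N`. -/
def distN (N x : ℤ) : ℤ := min (x % N) ((-x) % N)

/-!
Every point of `|Γ(a,b,N)|` with first coordinate `m₁ ≠ 0` lies coordinatewise above
`(m, |ma|_N, |mb|_N)` for the `m ∈ [1, N]` with `m ≡ ±m₁ mod N`, and every point with `m₁ = 0`
lies above `N e₂` or `N e₃`. Hence the relative minima are the minimal elements of this finite set
of candidates, which contains the axis points `N eᵢ` (`m = N` gives `N e₁`). By coprimality the
other candidates (`1 ≤ m < N`) have all coordinates in `(0, N)`, so a coordinate plane meets the
minima only in axis points. Two candidates sharing a coordinate have `m ≡ ±m' mod N`, so they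
agree in the last two coordinates and are comparable; being minimal, they coincide.
-/

section Order

variable {n : ℕ} {S : Set (Fin n → ℝ)}

theorem mem_box_singleton {g x : Fin n → ℝ} : x ∈ box {g} ↔ 0 ≤ x ∧ x ≤ g := by
  simp [box, Pi.le_def, forall_and]

theorem vrm_eq_setOf_minimal (hS : ∀ p ∈ S, 0 ≤ p) : vrm S = {g | Minimal (· ∈ S) g} := by
  ext g
  simp only [vrm, mem_box_singleton, Set.mem_ofPred_eq, minimal_mem_iff, not_and]
  refine and_congr_right fun _ => forall₂_congr fun p hp => ?_
  constructor
  · intro h hpg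
    by_contra hne
    exact h (Ne.symm hne) (hS p hp) hpg
  · rintro h hne - hpg
    exact hne (h hpg).symm

theorem nonneg_of_mem_absSet {L : Set (Fin n → ℝ)} {q : Fin n → ℝ} (hq : q ∈ absSet L) :
    0 ≤ q := by
  obtain ⟨⟨p, -, hqp⟩, -⟩ := hq
  intro i
  simp [hqp i]

theorem Pi.single_le_iff_of_nonneg {ι M : Type*} [DecidableEq ι] [Preorder M] [Zero M] {j : ι}
    {x : M} {p : ι → M} (hp : 0 ≤ p) : Pi.single j x ≤ p ↔ x ≤ p j := by
  refine ⟨fun h => by simpa using h j, fun h i => ?_⟩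
  rcases eq_or_ne i j with rfl | hij
  · simpa using h
  · simpa [hij] using hp i

end Order

section DistN

variable {N x y : ℤ}

@[simp] theorem distN_zero_right : distN N 0 = 0 := by simp [distN]

theorem distN_nonneg (hN : N ≠ 0) : 0 ≤ distN N x :=
  le_min (Int.emod_nonneg x hN) (Int.emod_nonneg (-x) hN)

theorem distN_lt (hN : 0 < N) : distN N x < N :=
  (min_le_left _ _).trans_lt (Int.emod_lt_of_pos x hN)

theorem distN_eq_distN_iff : distN N x = distN N y ↔ x ≡ y [ZMOD N] ∨ x ≡ -y [ZMOD N] := by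
  constructor
  · intro h
    unfold distN at h
    rcases min_choice (x % N) ((-x) % N) with hx | hx <;>
      rcases min_choice (y % N) ((-y) % N) with hy | hy <;> rw [hx, hy] at h
    · exact Or.inl h
    · exact Or.inr h
    · exact Or.inr (by simpa using Int.ModEq.neg h)
    · exact Or.inl (by simpa using Int.ModEq.neg h)
  · rintro (h | h)
    · simp only [distN, h.eq, h.neg.eq]
    · have h' : -x ≡ y [ZMOD N] := by simpa using h.neg
      simp only [distN, h.eq, h'.eq, min_comm]

theorem distN_eq_zero_iff : distN N x = 0 ↔ x ≡ 0 [ZMOD N] := by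
  simpa using distN_eq_distN_iff (N := N) (x := x) (y := 0)

theorem Int.emod_le_self_of_nonneg (hN : 0 < N) (hx : 0 ≤ x) : x % N ≤ x := by
  rcases lt_or_ge x N with h | h
  · exact (Int.emod_eq_of_lt hx h).le
  · exact ((Int.emod_lt_of_pos x hN).trans_le h).le

theorem distN_le_abs (hN : 0 < N) : distN N x ≤ |x| := by
  rcases le_total 0 x with hx | hx
  · exact (min_le_left _ _).trans
      ((Int.emod_le_self_of_nonneg hN hx).trans_eq (abs_of_nonneg hx).symm)
  · exact (min_le_right _ _).trans
      ((Int.emod_le_self_of_nonneg hN (neg_nonneg.2 hx)).trans_eq (abs_of_nonpos hx).symm)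

theorem distN_add_mul (k : ℤ) : distN N (x + k * N) = distN N x :=
  distN_eq_distN_iff.2 (Or.inl (by simp [Int.ModEq]))

theorem exists_abs_add_mul_eq_distN (hN : 0 < N) : ∃ k : ℤ, |x + k * N| = distN N x := by
  rcases min_choice (x % N) ((-x) % N) with h | h
  · refine ⟨-(x / N), ?_⟩
    rw [distN, h, ← abs_of_nonneg (Int.emod_nonneg x hN.ne'), Int.emod_def]
    ring_nf
  · refine ⟨(-x) / N, ?_⟩
    rw [distN, h, ← abs_of_nonneg (Int.emod_nonneg _ hN.ne'), Int.emod_def, ← abs_neg]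
    ring_nf

theorem distN_mul_eq_of_modEq {m m' : ℤ} (h : m ≡ m' [ZMOD N] ∨ m ≡ -m' [ZMOD N]) (c : ℤ) :
    distN N (m * c) = distN N (m' * c) :=
  distN_eq_distN_iff.2 (h.imp (·.mul_right c) fun h => by simpa using h.mul_right c)

theorem modEq_or_modEq_neg_of_distN_mul_eq {m m' c : ℤ} (hN : 0 < N) (hc : Int.gcd c N = 1)
    (h : distN N (m * c) = distN N (m' * c)) : m ≡ m' [ZMOD N] ∨ m ≡ -m' [ZMOD N] := by
  have cancel {u v : ℤ} (huv : u * c ≡ v * c [ZMOD N]) : u ≡ v [ZMOD N] := by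
    have hc' : (N.gcd c : ℤ) = 1 := by rw [Int.gcd_comm, hc]; rfl
    simpa [hc'] using huv.cancel_right_div_gcd hN
  rcases distN_eq_distN_iff.1 h with h | h
  · exact Or.inl (cancel h)
  · exact Or.inr (cancel (by simpa using h))

theorem distN_mul_pos {m c : ℤ} (hc : Int.gcd c N = 1) (hm : 0 < m) (hmN : m < N) :
    0 < distN N (m * c) := by
  refine (distN_nonneg (hm.trans hmN).ne').lt_of_ne fun h => ?_
  have hm0 : m ≡ 0 [ZMOD N] := by
    simpa using
      modEq_or_modEq_neg_of_distN_mul_eq (m' := 0) (hm.trans hmN) hc (by simpa using h.symm)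
  exact hm.ne' (by simpa [Int.ModEq, Int.emod_eq_of_lt hm.le hmN] using hm0)

end DistN

def lowestPoint (a b N m : ℤ) : Fin 3 → ℝ :=
  ![(m : ℝ), (distN N (m * a) : ℝ), (distN N (m * b) : ℝ)]

def candidates (a b N : ℤ) : Set (Fin 3 → ℝ) :=
  lowestPoint a b N '' Set.Ico 1 N ∪ Set.range fun j => Pi.single j (N : ℝ)

section Lattice

variable {a b N : ℤ}

theorem mem_absSet_Gamma {q : Fin 3 → ℝ} :
    q ∈ absSet (Gamma a b N) ↔ q ≠ 0 ∧ ∃ m₁ m₂ m₃ : ℤ,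
      q = ![|(m₁ : ℝ)|, |(m₁ : ℝ) * a + m₂ * N|, |(m₁ : ℝ) * b + m₃ * N|] := by
  refine and_comm.trans (and_congr_right fun _ => ⟨?_, ?_⟩)
  · rintro ⟨p, ⟨m₁, m₂, m₃, rfl⟩, hq⟩
    exact ⟨m₁, m₂, m₃, funext fun i => by fin_cases i <;> simp [hq]⟩
  · rintro ⟨m₁, m₂, m₃, rfl⟩
    exact ⟨_, ⟨m₁, m₂, m₃, rfl⟩, fun i => by fin_cases i <;> simp⟩

theorem lowestPoint_self : lowestPoint a b N N = Pi.single 0 (N : ℝ) := by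
  ext i
  fin_cases i <;> simp [lowestPoint, distN_eq_zero_iff, Int.ModEq, Int.mul_emod_right]

theorem lowestPoint_mem_absSet_Gamma (hN : 0 < N) {m : ℤ} (hm : 0 < m) :
    lowestPoint a b N m ∈ absSet (Gamma a b N) := by
  obtain ⟨k₂, hk₂⟩ := exists_abs_add_mul_eq_distN (x := m * a) hN
  obtain ⟨k₃, hk₃⟩ := exists_abs_add_mul_eq_distN (x := m * b) hN
  refine mem_absSet_Gamma.2 ⟨fun h => hm.ne' (by simpa [lowestPoint] using congrFun h 0),
    m, k₂, k₃, ?_⟩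
  ext i
  fin_cases i
  · simp [lowestPoint, abs_of_pos (Int.cast_pos.2 hm)]
  · simp [lowestPoint, ← hk₂]
  · simp [lowestPoint, ← hk₃]

theorem single_mem_absSet_Gamma (hN : 0 < N) (j : Fin 3) :
    Pi.single j (N : ℝ) ∈ absSet (Gamma a b N) := by
  have hN0 : (Pi.single j (N : ℝ) : Fin 3 → ℝ) ≠ 0 := fun h =>
    hN.ne' (by simpa using congrFun h j)
  have hNabs : |(N : ℝ)| = N := abs_of_pos (Int.cast_pos.2 hN)
  fin_cases j
  · simpa [lowestPoint_self] using lowestPoint_mem_absSet_Gamma (a := a) (b := b) hN hN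
  · refine mem_absSet_Gamma.2 ⟨hN0, 0, 1, 0, ?_⟩
    ext i
    fin_cases i <;> simp [hNabs]
  · refine mem_absSet_Gamma.2 ⟨hN0, 0, 0, 1, ?_⟩
    ext i
    fin_cases i <;> simp [hNabs]

theorem candidates_subset_absSet_Gamma (hN : 0 < N) :
    candidates a b N ⊆ absSet (Gamma a b N) := by
  rintro _ (⟨m, hm, rfl⟩ | ⟨j, rfl⟩)
  · exact lowestPoint_mem_absSet_Gamma hN hm.1
  · exact single_mem_absSet_Gamma hN j

theorem le_abs_mul_of_ne_zero {m : ℤ} (hN : 0 < N) (hm : m ≠ 0) : N ≤ |m * N| := by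
  rw [abs_mul, abs_of_pos hN]
  exact le_mul_of_one_le_left hN.le (Int.one_le_abs hm)

theorem exists_candidate_le (hN : 0 < N) {q : Fin 3 → ℝ} (hq : q ∈ absSet (Gamma a b N)) :
    ∃ c ∈ candidates a b N, c ≤ q := by
  have hq_nonneg := nonneg_of_mem_absSet hq
  obtain ⟨hq_ne, m₁, m₂, m₃, rfl⟩ := mem_absSet_Gamma.1 hq
  have single_le (j : Fin 3) (h : (N : ℝ) ≤ _) : ∃ c ∈ candidates a b N, c ≤ _ :=
    ⟨_, Or.inr ⟨j, rfl⟩, (Pi.single_le_iff_of_nonneg hq_nonneg).2 h⟩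
  rcases eq_or_ne m₁ 0 with rfl | hm₁
  · by_cases hm₂ : m₂ = 0
    · have hm₃ : m₃ ≠ 0 := by rintro rfl; simp [hm₂] at hq_ne
      refine single_le 2 ?_
      show (N : ℝ) ≤ |((0 : ℤ) : ℝ) * b + m₃ * N|
      rw [Int.cast_zero, zero_mul, zero_add]
      exact_mod_cast le_abs_mul_of_ne_zero hN hm₃
    · refine single_le 1 ?_
      show (N : ℝ) ≤ |((0 : ℤ) : ℝ) * a + m₂ * N|
      rw [Int.cast_zero, zero_mul, zero_add]
      exact_mod_cast le_abs_mul_of_ne_zero hN hm₂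
  set m := |m₁| % N
  have hmm : m ≡ m₁ [ZMOD N] ∨ m ≡ -m₁ [ZMOD N] := by
    rcases abs_choice m₁ with h | h <;> [left; right] <;> rw [← h] <;> exact Int.mod_modEq _ _
  rcases eq_or_ne m 0 with h0 | h0
  · refine single_le 0 ?_
    show (N : ℝ) ≤ |(m₁ : ℝ)|
    exact_mod_cast Int.le_of_dvd (abs_pos.2 hm₁) (Int.dvd_of_emod_eq_zero h0)
  have hm0 : 0 < m := (Int.emod_nonneg _ hN.ne').lt_of_ne h0.symm
  refine ⟨lowestPoint a b N m, Or.inl ⟨m, ⟨hm0, Int.emod_lt_of_pos _ hN⟩, rfl⟩, ?_⟩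
  have le_coord (c k : ℤ) : distN N (m * c) ≤ |m₁ * c + k * N| := by
    rw [distN_mul_eq_of_modEq hmm, ← distN_add_mul k]
    exact distN_le_abs hN
  have hm₁m : m ≤ |m₁| := Int.emod_le_self_of_nonneg hN (abs_nonneg m₁)
  simp only [lowestPoint, Pi.le_def, Fin.forall_fin_succ, IsEmpty.forall_iff, and_true,
    Matrix.cons_val_zero, Matrix.cons_val_succ]
  exact ⟨by exact_mod_cast hm₁m, by exact_mod_cast le_coord a m₂, by exact_mod_cast le_coord b m₃⟩

theorem vrm_absSet_Gamma (hN : 0 < N) :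
    vrm (absSet (Gamma a b N)) = {g | Minimal (· ∈ candidates a b N) g} := by
  rw [vrm_eq_setOf_minimal fun _ => nonneg_of_mem_absSet]
  ext g
  exact minimal_iff_minimal_of_imp_of_forall (fun _ h => candidates_subset_absSet_Gamma hN h)
    fun _ hq => (exists_candidate_le hN hq).imp fun _ hc => hc.symm

end Lattice

section Coprime

variable {a b N m m' : ℤ}

theorem lowestPoint_pos (ha : Int.gcd a N = 1) (hb : Int.gcd b N = 1) (hm : 0 < m)
    (hmN : m < N) (i : Fin 3) : 0 < lowestPoint a b N m i := by
  fin_cases i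
  · exact Int.cast_pos.2 hm
  · exact Int.cast_pos.2 (distN_mul_pos ha hm hmN)
  · exact Int.cast_pos.2 (distN_mul_pos hb hm hmN)

theorem lowestPoint_lt (hN : 0 < N) (hmN : m < N) (i : Fin 3) : lowestPoint a b N m i < N := by
  fin_cases i
  · exact Int.cast_lt.2 hmN
  · exact Int.cast_lt.2 (distN_lt hN)
  · exact Int.cast_lt.2 (distN_lt hN)

theorem lowestPoint_apply_ne_single_apply (ha : Int.gcd a N = 1) (hb : Int.gcd b N = 1)
    (hm : 0 < m) (hmN : m < N) (i j : Fin 3) :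
    lowestPoint a b N m i ≠ (Pi.single j (N : ℝ) : Fin 3 → ℝ) i := by
  rcases eq_or_ne i j with rfl | hij
  · simpa using (lowestPoint_lt (hm.trans hmN) hmN i).ne
  · simpa [Pi.single_eq_of_ne hij] using (lowestPoint_pos ha hb hm hmN i).ne'

theorem modEq_or_modEq_neg_of_lowestPoint_apply_eq (hN : 0 < N) (ha : Int.gcd a N = 1)
    (hb : Int.gcd b N = 1) {i : Fin 3} (h : lowestPoint a b N m i = lowestPoint a b N m' i) :
    m ≡ m' [ZMOD N] ∨ m ≡ -m' [ZMOD N] := by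
  fin_cases i
  · obtain rfl : m = m' := Int.cast_injective h
    exact Or.inl rfl
  · exact modEq_or_modEq_neg_of_distN_mul_eq hN ha (Int.cast_injective h)
  · exact modEq_or_modEq_neg_of_distN_mul_eq hN hb (Int.cast_injective h)

theorem lowestPoint_le_lowestPoint (hle : m ≤ m') (h : m ≡ m' [ZMOD N] ∨ m ≡ -m' [ZMOD N]) :
    lowestPoint a b N m ≤ lowestPoint a b N m' := by
  intro i
  fin_cases i
  · exact Int.cast_le.2 hle
  · exact Int.cast_le.2 (distN_mul_eq_of_modEq h a).le
  · exact Int.cast_le.2 (distN_mul_eq_of_modEq h b).le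

theorem minimal_single (hN : 0 < N) (ha : Int.gcd a N = 1) (hb : Int.gcd b N = 1) (j : Fin 3) :
    Minimal (· ∈ candidates a b N) (Pi.single j (N : ℝ)) := by
  refine minimal_mem_iff.2 ⟨Or.inr ⟨j, rfl⟩, ?_⟩
  rintro _ (⟨m, hm, rfl⟩ | ⟨k, rfl⟩) hle
  · obtain ⟨k, hk⟩ := exists_ne j
    exact ((lowestPoint_pos ha hb hm.1 hm.2 k).not_ge
      ((hle k).trans_eq (Pi.single_eq_of_ne hk _))).elim
  · obtain rfl : k = j := by
      by_contra hkj
      have hNk := hle k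
      simp only [Pi.single_eq_same, Pi.single_eq_of_ne hkj, Int.cast_nonpos] at hNk
      exact hNk.not_gt hN
    rfl

theorem eq_single_of_mem_candidates_of_apply_eq_zero (hN : 0 < N) (ha : Int.gcd a N = 1)
    (hb : Int.gcd b N = 1) {r : Fin 3 → ℝ} (hr : r ∈ candidates a b N) {i : Fin 3}
    (h : r i = 0) : ∃ j ≠ i, r = Pi.single j (N : ℝ) := by
  rcases hr with ⟨m, hm, rfl⟩ | ⟨j, rfl⟩
  · exact absurd h (lowestPoint_pos ha hb hm.1 hm.2 i).ne'
  · refine ⟨j, ?_, rfl⟩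
    rintro rfl
    simp [hN.ne'] at h

theorem lowestPoint_eq_of_minimal_of_apply_eq (hN : 0 < N) (ha : Int.gcd a N = 1)
    (hb : Int.gcd b N = 1) (hm : Minimal (· ∈ candidates a b N) (lowestPoint a b N m))
    (hm' : Minimal (· ∈ candidates a b N) (lowestPoint a b N m')) {i : Fin 3}
    (h : lowestPoint a b N m i = lowestPoint a b N m' i) :
    lowestPoint a b N m = lowestPoint a b N m' := by
  wlog hle : m ≤ m' generalizing m m'
  · exact (this hm' hm h.symm (le_of_not_ge hle)).symm
  exact hm'.eq_of_le hm.prop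
    (lowestPoint_le_lowestPoint hle (modEq_or_modEq_neg_of_lowestPoint_apply_eq hN ha hb h))

theorem eq_of_minimal_of_apply_eq (hN : 0 < N) (ha : Int.gcd a N = 1) (hb : Int.gcd b N = 1)
    {r s : Fin 3 → ℝ} (hr : Minimal (· ∈ candidates a b N) r)
    (hs : Minimal (· ∈ candidates a b N) s) {i : Fin 3} (h : r i = s i) (h0 : r i ≠ 0) :
    r = s := by
  rcases id hr.prop with ⟨m, hm, rfl⟩ | ⟨j, rfl⟩ <;>
    rcases id hs.prop with ⟨m', hm', rfl⟩ | ⟨j', rfl⟩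
  · exact lowestPoint_eq_of_minimal_of_apply_eq hN ha hb hr hs h
  · exact absurd h (lowestPoint_apply_ne_single_apply ha hb hm.1 hm.2 i j')
  · exact absurd h.symm (lowestPoint_apply_ne_single_apply ha hb hm'.1 hm'.2 i j)
  · obtain rfl : i = j := by_contra fun hij => h0 (Pi.single_eq_of_ne hij _)
    obtain rfl : i = j' := by_contra fun hij => h0 (h.trans (Pi.single_eq_of_ne hij _))
    rfl

end Coprime

theorem generalPosition_of_forall_single {S : Set (Fin 3 → ℝ)} {x : ℝ} (hx : x ≠ 0)
    (hsingle : ∀ j, Pi.single j x ∈ S)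
    (hzero : ∀ r ∈ S, ∀ i, r i = 0 → ∃ j ≠ i, r = Pi.single j x)
    (hplane : ∀ r ∈ S, ∀ s ∈ S, ∀ i, r i = s i → r i ≠ 0 → r = s) : GeneralPosition S := by
  refine ⟨fun i => ?_, fun i c hc r ⟨hr, hri⟩ s ⟨hs, hsi⟩ =>
    hplane r hr s hs i (hri.trans hsi.symm) (hri ▸ hc)⟩
  obtain ⟨j, k, hji, hki, hjk, hother⟩ :
      ∃ j k : Fin 3, j ≠ i ∧ k ≠ i ∧ j ≠ k ∧ ∀ l, l ≠ i → l = j ∨ l = k := by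
    revert i; decide
  have onAxis (l : Fin 3) : OnAxis l (Pi.single l x) :=
    ⟨fun h => hx (by simpa using congrFun h l), fun _ hk => Pi.single_eq_of_ne hk _⟩
  refine ⟨_, _, fun h => hx (by simpa [Pi.single_eq_of_ne hjk] using congrFun h j), ?_,
    j, k, hji, hki, hjk, onAxis j, onAxis k⟩
  ext r
  constructor
  · rintro ⟨hr, hri⟩
    obtain ⟨l, hl, rfl⟩ := hzero r hr i hri
    rcases hother l hl with rfl | rfl
    · exact Or.inl rfl
    · exact Or.inr rfl
  · rintro (rfl | rfl)
    · exact ⟨hsingle j, Pi.single_eq_of_ne hji.symm _⟩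
    · exact ⟨hsingle k, Pi.single_eq_of_ne hki.symm _⟩

theorem vrm_finite_axial_generalPosition_general
    (a b N : ℤ) (hN : 1 ≤ N)
    (haN : Int.gcd a N = 1) (hbN : Int.gcd b N = 1) :
    (vrm (absSet (Gamma a b N))).Finite ∧
      (∀ p ∈ vrm (absSet (Gamma a b N)), ∀ i, 0 ≤ p i) ∧
      Axial (vrm (absSet (Gamma a b N))) ∧
      GeneralPosition (vrm (absSet (Gamma a b N))) := by
  replace hN : 0 < N := hN
  have hsingle (j : Fin 3) := minimal_single hN haN hbN j
  rw [vrm_absSet_Gamma hN]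
  refine ⟨?_, fun p hp => nonneg_of_mem_absSet (candidates_subset_absSet_Gamma hN hp.prop),
    fun j => ⟨_, hsingle j, fun _ hk => Pi.single_eq_of_ne hk _⟩, ?_⟩
  · exact (((Set.finite_Ico 1 N).image _).union (Set.finite_range _)).subset fun _ hg => hg.prop
  · exact generalPosition_of_forall_single (Int.cast_ne_zero.2 hN.ne') hsingle
      (fun r hr _ => eq_single_of_mem_candidates_of_apply_eq_zero hN haN hbN hr.prop)
      (fun r hr s hs _ => eq_of_minimal_of_apply_eq hN haN hbN hr hs)

/-- Let `a, b, N` be positive integers such that both `a` and `b` are coprime to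
`N`. Then `vrm(|Γ(a,b,N)|)` is a finite axial subset of `ℝ³_{≥0}` in general
position. -/
theorem vrm_finite_axial_generalPosition
    (a b N : ℤ) (ha : 1 ≤ a) (hb : 1 ≤ b) (hN : 1 ≤ N)
    (haN : Int.gcd a N = 1) (hbN : Int.gcd b N = 1) :
    (vrm (absSet (Gamma a b N))).Finite ∧
      (∀ p ∈ vrm (absSet (Gamma a b N)), ∀ i, 0 ≤ p i) ∧
      Axial (vrm (absSet (Gamma a b N))) ∧
      GeneralPosition (vrm (absSet (Gamma a b N))) :=
  vrm_finite_axial_generalPosition_general a b N hN haN hbN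
end

section
/- There exist rational numbers ν₁, ν₂, ν₃, depending only on the combinatorial part (α, β, γ, a), such that for all integers t ≥ 1 and u ≥ 1 the number b′ = ν₁·N(t,u) + ν₂·u + ν₃ is an integer satisfying |b(t)·b′|_{N(t,u)} = 1 (i.e., b′ is an inverse of ±b(t) modulo N(t,u)). -/
/-- There exist rationals `ν₁, ν₂, ν₃`, depending only on the combinatorial part
`(α, β, γ, a)`, such that for all integers `t ≥ 1` and `u ≥ 1` the number
`b′ = ν₁·N(t,u) + ν₂·u + ν₃` is an integer satisfying `|b(t)·b′|_{N(t,u)} = 1`,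
where `b(t) = αat + β` and `N(t,u) = b(t)(au + γ) + α`. -/
theorem exists_inverse_affine_form
    (a α β γ : ℤ) (ha : 1 ≤ a) (hα : 1 ≤ α)
    (hβ : 0 ≤ β ∧ β < α * a) (hγ : 0 ≤ γ ∧ γ < a)
    (hcop1 : Int.gcd α β = 1) (hcop2 : Int.gcd a (α + β * γ) = 1) :
    ∃ ν₁ ν₂ ν₃ : ℚ, ∀ t u : ℤ, 1 ≤ t → 1 ≤ u →
      ∃ b' : ℤ,
        (b' : ℚ) = ν₁ * (((α * a * t + β) * (a * u + γ) + α : ℤ) : ℚ)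
            + ν₂ * (u : ℚ) + ν₃ ∧
        distN ((α * a * t + β) * (a * u + γ) + α) ((α * a * t + β) * b') = 1 := by
  obtain ⟨hβ0, hβlt⟩ := hβ
  obtain ⟨hγ0, hγlt⟩ := hγ
  set A := Int.gcdA α β with hA
  set s := Int.gcdB α β with hs
  have hbez : α * A + β * s = 1 := by
    have h := Int.gcd_eq_gcd_ab α β
    rw [hcop1] at h
    push_cast at h
    linarith
  refine ⟨(s : ℚ) / α, -(a : ℚ) / α, -(γ : ℚ) / α, ?_⟩
  intro t u ht hu
  set b : ℤ := α * a * t + β with hb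
  set N : ℤ := b * (a * u + γ) + α with hN
  set k : ℤ := s * a * t - A with hk
  have hαk : α * k = s * b - 1 := by
    rw [hk, hb]; ring_nf; linarith [hbez]
  refine ⟨k * (a * u + γ) + s, ?_, ?_⟩
  · have hZ : α * (k * (a * u + γ) + s) = s * N - (a * u + γ) := by
      rw [hN]; linear_combination (a * u + γ) * hαk
    have hαne : (α : ℚ) ≠ 0 := by
      exact_mod_cast (by omega : (α : ℤ) ≠ 0)
    have hZQ : (α : ℚ) * ((k * (a * u + γ) + s : ℤ) : ℚ)
        = (s : ℚ) * (N : ℚ) - ((a : ℚ) * u + γ) := by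
      exact_mod_cast congrArg (fun x : ℤ => (x : ℚ)) hZ
    field_simp
    push_cast at hZQ ⊢
    linarith [hZQ]
  · have hb1 : 1 ≤ b := by nlinarith
    have hau : 1 ≤ a * u + γ := by nlinarith
    have hN2 : 2 ≤ N := by nlinarith
    have hx : b * (k * (a * u + γ) + s) = k * N + 1 := by
      rw [hN]; linear_combination -hαk
    rw [hx]
    unfold distN
    have h1 : (k * N + 1) % N = 1 := by
      rw [show k * N + 1 = 1 + N * k by ring, Int.add_mul_emod_self_left,
        Int.emod_eq_of_lt (by omega) (by omega)]
    have h2 : (-(k * N + 1)) % N = N - 1 := by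
      rw [show -(k * N + 1) = (N - 1) + N * (-k - 1) by ring,
        Int.add_mul_emod_self_left, Int.emod_eq_of_lt (by omega) (by omega)]
    rw [h1, h2]
    omega
end
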